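/- Let K ≥ 2, let θ ∈ Δ and k ∈ {1,…,K}. For every u ∈ Δ, u belongs to Δ_k(θ) if and only if u_ℓ · θ_k ≥ θ_ℓ · u_k for all ℓ ∈ {1,…,K} (equivalently, u_ℓ/u_k ≥ θ_ℓ/θ_k for all ℓ whenever u_k > 0 and θ_k > 0). -/
import Mathlib


noncomputable section

/-- The `ℓ`-th vertex of the probability simplex in `ℝ^K` (standard basis vector). -/
def vtx (K : ℕ) (ℓ : Fin K) : Fin K → ℝ := fun i => if i = ℓ then 1 else 0

/-- The subsimplex `Δ_k(θ)`: convex hull of `{θ} ∪ {V_ℓ : ℓ ≠ k}`. -/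
def subsimplex (K : ℕ) (k : Fin K) (θ : Fin K → ℝ) : Set (Fin K → ℝ) :=
  convexHull ℝ (insert θ {z | ∃ ℓ : Fin K, ℓ ≠ k ∧ z = vtx K ℓ})

theorem stmt0 (K : ℕ) (hK : 2 ≤ K) (θ : Fin K → ℝ) (hθ : θ ∈ stdSimplex ℝ (Fin K))
    (k : Fin K) (u : Fin K → ℝ) (hu : u ∈ stdSimplex ℝ (Fin K)) :
    u ∈ subsimplex K k θ ↔ ∀ ℓ : Fin K, θ ℓ * u k ≤ u ℓ * θ k := by
  constructor
  · intro h ℓ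
    have hconv : Convex ℝ {x : Fin K → ℝ | θ ℓ * x k ≤ x ℓ * θ k} := by
      intro x hx y hy a b ha hb hab
      simp only [Set.mem_setOf_eq] at hx hy ⊢
      have h1 := mul_le_mul_of_nonneg_left hx ha
      have h2 := mul_le_mul_of_nonneg_left hy hb
      simp only [Pi.add_apply, Pi.smul_apply, smul_eq_mul]
      nlinarith
    have hsub : (insert θ {z | ∃ m : Fin K, m ≠ k ∧ z = vtx K m}) ⊆
        {x : Fin K → ℝ | θ ℓ * x k ≤ x ℓ * θ k} := by
      rintro x (hx | ⟨m, hm, rfl⟩)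
      · rw [hx]
        show θ ℓ * θ k ≤ θ ℓ * θ k
        exact le_rfl
      · have hxk : vtx K m k = 0 := by simp [vtx, (Ne.symm hm)]
        have hxl : 0 ≤ vtx K m ℓ := by unfold vtx; positivity
        simp only [Set.mem_setOf_eq, hxk, mul_zero]
        exact mul_nonneg hxl (hθ.1 k)
    exact convexHull_min hsub hconv h
  · intro h
    -- define coefficient a with u k = a * θ k
    set a : ℝ := if θ k = 0 then 0 else u k / θ k with ha_def
    have huk : u k = a * θ k := by
      by_cases hk : θ k = 0
      · -- then u k = 0
        obtain ⟨m, hm⟩ : ∃ m, θ m ≠ 0 := by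
          by_contra hc
          push_neg at hc
          have : (∑ i, θ i) = 0 := Finset.sum_eq_zero fun i _ => hc i
          rw [hθ.2] at this; norm_num at this
        have hθm : 0 < θ m := lt_of_le_of_ne (hθ.1 m) (Ne.symm hm)
        have := h m
        rw [hk, mul_zero] at this
        have huk0 : u k = 0 := by nlinarith [hu.1 k]
        simp [ha_def, hk, huk0]
      · simp only [ha_def, if_neg hk]
        field_simp
    have ha0 : 0 ≤ a := by
      by_cases hk : θ k = 0
      · simp [ha_def, hk]
      · simp [ha_def, hk]
        exact div_nonneg (hu.1 k) (hθ.1 k)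
    have hb : ∀ ℓ, 0 ≤ u ℓ - a * θ ℓ := by
      intro ℓ
      by_cases hk : θ k = 0
      · simp [ha_def, hk]; exact hu.1 ℓ
      · have hθk : 0 < θ k := lt_of_le_of_ne (hθ.1 k) (Ne.symm hk)
        have := h ℓ
        have ha : a = u k / θ k := by simp [ha_def, hk]
        rw [ha]
        rw [sub_nonneg, div_mul_eq_mul_div, div_le_iff₀ hθk]
        nlinarith
    set w : Fin K → ℝ := fun ℓ => if ℓ = k then a else u ℓ - a * θ ℓ with hw_def
    set z : Fin K → (Fin K → ℝ) := fun ℓ => if ℓ = k then θ else vtx K ℓ with hz_def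
    have hw0 : ∀ ℓ, 0 ≤ w ℓ := by
      intro ℓ
      by_cases hl : ℓ = k <;> simp [hw_def, hl, ha0, hb ℓ]
    have hweq : ∀ ℓ, w ℓ = u ℓ - a * θ ℓ + (if ℓ = k then a else 0) := by
      intro ℓ
      by_cases hl : ℓ = k <;> simp [hw_def, hl]
      rw [huk]; ring
    have hwsum : ∑ ℓ, w ℓ = 1 := by
      simp only [hweq]
      rw [Finset.sum_add_distrib, Finset.sum_sub_distrib, Finset.sum_ite_eq' Finset.univ k]
      rw [← Finset.mul_sum, hu.2, hθ.2]
      simp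
    have hzmem : ∀ ℓ : Fin K, z ℓ ∈ insert θ {x | ∃ m : Fin K, m ≠ k ∧ x = vtx K m} := by
      intro ℓ
      by_cases hl : ℓ = k
      · simp [hz_def, hl]
      · right; exact ⟨ℓ, hl, by simp [hz_def, hl]⟩
    have hcm : Finset.univ.centerMass w z ∈ subsimplex K k θ := by
      apply Finset.centerMass_mem_convexHull
      · exact fun i _ => hw0 i
      · rw [hwsum]; norm_num
      · exact fun i _ => hzmem i
    have heq : Finset.univ.centerMass w z = u := by
      rw [Finset.centerMass_eq_of_sum_1 _ _ hwsum]
      funext i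
      have : (∑ ℓ, w ℓ • z ℓ) i = ∑ ℓ, w ℓ * z ℓ i := by
        rw [Finset.sum_apply]; simp
      rw [this]
      have hterm : ∀ ℓ : Fin K, w ℓ * z ℓ i =
          (if ℓ = k then a * θ i else 0) + (if ℓ = i ∧ ℓ ≠ k then u i - a * θ i else 0) := by
        intro ℓ
        by_cases hl : ℓ = k
        · subst hl
          by_cases hik : i = ℓ
          · simp [hz_def, hw_def, ← hik, huk]
          · simp [hz_def, hw_def, Ne.symm hik]
        · by_cases hil : ℓ = i
          · subst hil
            simp [hz_def, hw_def, hl, vtx]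
          · simp [hz_def, hw_def, hl, hil, vtx, Ne.symm hil]
      simp only [hterm]
      rw [Finset.sum_add_distrib, Finset.sum_ite_eq' Finset.univ k]
      have hs2 : (∑ x : Fin K, if x = i ∧ x ≠ k then u i - a * θ i else 0)
          = if i ≠ k then u i - a * θ i else 0 := by
        rw [Finset.sum_eq_single i]
        · by_cases hik : i = k <;> simp [hik]
        · intro b _ hb; simp [hb]
        · simp
      rw [hs2]
      by_cases hik : i = k
      · simp [hik, huk]
      · simp [hik]
    rw [← heq]
    exact hcm
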